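/- Let $p_1, p_2, q_1, q_2 \in \mathcal{P}_1(\mathbb{R})$ satisfy $p_1 + p_2 = q_1 + q_2$ and $\int y\,p_i(dy) = \int y\,q_i(dy)$ for $i = 1,2$. Suppose $p_i^k \to p_i$ in $\mathcal{W}_1$ for $i = 1,2$. Then there exist sequences $(q_i^k)_k$ in $\mathcal{P}_1(\mathbb{R})$ with $q_1^k + q_2^k = p_1^k + p_2^k$, $\int y\,q_i^k(dy) = \int y\,p_i^k(dy)$ for $i=1,2$ and all $k$, and $q_i^k \to q_i$ in $\mathcal{W}_1$. -/

import Mathlib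

/-!
Couple `P₁ = pk₁ k` to `p₁` and `P₂ = pk₂ k` to `p₂` almost optimally. As `p₁ + p₂ = q₁ + q₂`,
the sum of the two plans splits, through the densities `dqᵢ / d(q₁ + q₂)` of its second
marginal, into plans from some `bᵢ` to `qᵢ` with `b₁ + b₂ = P₁ + P₂`, each costing at most
about `W₁(P₁, p₁) + W₁(P₂, p₂)`. The `bᵢ` may have wrong barycenters, but barycenters are
1-Lipschitz for `W₁`, so the error `ε` is small. To remove it, cut `P₁ + P₂` at a median into
an upper and a lower half of mass one: the upper half dominates every probability measure
below `P₁ + P₂`, which dominates the lower half, and along such monotone couplings the cost is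
exactly the difference of barycenters. Hence moving the fraction `t` of `b₁` to the upper half
and of `b₂` to the lower half, for the `t ∈ [0, 1]` that fixes the barycenters, costs `|ε|` in
`W₁`; the triangle inequality for `W₁` (gluing of couplings) concludes.
-/

open MeasureTheory Filter Topology
open Set ProbabilityTheory
open scoped ENNReal

noncomputable section

/-- A coupling of `μ` and `ν`: a measure on the product with the given marginals. -/
def IsCoupling {X Y : Type*} [MeasurableSpace X] [MeasurableSpace Y]
    (π : Measure (X × Y)) (μ : Measure X) (ν : Measure Y) : Prop :=
  π.map Prod.fst = μ ∧ π.map Prod.snd = ν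

/-- `WrPow r p q` is the `r`-th power of the `r`-Wasserstein distance:
`inf { ∫ d(y₁,y₂)^r dπ : π coupling of p, q }`. -/
noncomputable def WrPow {Y : Type*} [MeasurableSpace Y] [PseudoMetricSpace Y]
    (r : ℝ) (p q : Measure Y) : ℝ :=
  sInf {v | ∃ π : Measure (Y × Y), IsCoupling π p q ∧ v = ∫ z, dist z.1 z.2 ^ r ∂π}

/-- Convergence in the `r`-Wasserstein metric. -/
def TendstoWr {Y : Type*} [MeasurableSpace Y] [PseudoMetricSpace Y]
    (r : ℝ) (pk : ℕ → Measure Y) (p : Measure Y) : Prop :=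
  Tendsto (fun k => WrPow r (pk k) p) atTop (nhds 0)

/-- Finite `r`-th moment. -/
def FiniteMomentR {Y : Type*} [MeasurableSpace Y] [PseudoMetricSpace Y]
    (r : ℝ) (p : Measure Y) : Prop :=
  ∃ y0 : Y, Integrable (fun y => dist y y0 ^ r) p

/-- Membership in `𝒫_r(Y)`: a probability measure with finite `r`-th moment. -/
def MemPr {Y : Type*} [MeasurableSpace Y] [PseudoMetricSpace Y]
    (r : ℝ) (p : Measure Y) : Prop :=
  IsProbabilityMeasure p ∧ FiniteMomentR r p

section Coupling

variable {X Y : Type*} [MeasurableSpace X] [MeasurableSpace Y]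

lemma IsCoupling.add {π π' : Measure (X × Y)} {μ μ' : Measure X} {ν ν' : Measure Y}
    (h : IsCoupling π μ ν) (h' : IsCoupling π' μ' ν') :
    IsCoupling (π + π') (μ + μ') (ν + ν') :=
  ⟨by rw [Measure.map_add _ _ measurable_fst, h.1, h'.1],
    by rw [Measure.map_add _ _ measurable_snd, h.2, h'.2]⟩

lemma IsCoupling.smul {π : Measure (X × Y)} {μ : Measure X} {ν : Measure Y}
    (h : IsCoupling π μ ν) (c : ℝ≥0∞) : IsCoupling (c • π) (c • μ) (c • ν) :=
  ⟨by rw [Measure.map_smul, h.1], by rw [Measure.map_smul, h.2]⟩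

lemma IsCoupling.swap {π : Measure (X × Y)} {μ : Measure X} {ν : Measure Y}
    (h : IsCoupling π μ ν) : IsCoupling (π.map Prod.swap) ν μ :=
  ⟨by rw [Measure.map_map measurable_fst measurable_swap]; exact h.2,
    by rw [Measure.map_map measurable_snd measurable_swap]; exact h.1⟩

lemma IsCoupling.measure_univ_eq {π : Measure (X × Y)} {μ : Measure X} {ν : Measure Y}
    (h : IsCoupling π μ ν) : μ univ = ν univ := by
  rw [← h.1, ← h.2, Measure.map_apply measurable_fst .univ,
    Measure.map_apply measurable_snd .univ, preimage_univ, preimage_univ]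

lemma isCoupling_map_diag (μ : Measure X) : IsCoupling (μ.map fun x => (x, x)) μ μ :=
  ⟨by rw [Measure.map_map measurable_fst (by fun_prop)]; exact Measure.map_id,
    by rw [Measure.map_map measurable_snd (by fun_prop)]; exact Measure.map_id⟩

lemma isCoupling_smul_prod {μ : Measure X} {ν : Measure Y} [IsFiniteMeasure μ]
    [IsFiniteMeasure ν] (h : μ univ = ν univ) :
    IsCoupling ((μ univ)⁻¹ • μ.prod ν) μ ν := by
  rcases eq_or_ne (μ univ) 0 with h0 | h0
  · obtain rfl := Measure.measure_univ_eq_zero.1 h0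
    obtain rfl := Measure.measure_univ_eq_zero.1 (h ▸ h0)
    simp [IsCoupling]
  · have hinv : (μ univ)⁻¹ * μ univ = 1 := ENNReal.inv_mul_cancel h0 (measure_ne_top _ _)
    refine ⟨?_, ?_⟩
    · rw [Measure.map_smul, Measure.map_fst_prod, smul_smul, ← h, hinv, one_smul]
    · rw [Measure.map_smul, Measure.map_snd_prod, smul_smul, hinv, one_smul]

lemma isCoupling_prod (μ : Measure X) (ν : Measure Y) [IsProbabilityMeasure μ]
    [IsProbabilityMeasure ν] : IsCoupling (μ.prod ν) μ ν := by
  simpa using isCoupling_smul_prod (μ := μ) (ν := ν) (by simp)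

lemma IsCoupling.isFiniteMeasure {π : Measure (X × Y)} {μ : Measure X} {ν : Measure Y}
    (h : IsCoupling π μ ν) [IsFiniteMeasure μ] : IsFiniteMeasure π :=
  ⟨by simpa [← h.1, Measure.map_apply measurable_fst .univ] using measure_lt_top μ univ⟩

end Coupling

lemma map_snd_withDensity_comp_snd {X Y : Type*} [MeasurableSpace X] [MeasurableSpace Y]
    (π : Measure (X × Y)) {f : Y → ℝ≥0∞} (hf : Measurable f) :
    (π.withDensity (f ∘ Prod.snd)).map Prod.snd = (π.map Prod.snd).withDensity f := by
  ext s hs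
  rw [Measure.map_apply measurable_snd hs, withDensity_apply _ (measurable_snd hs),
    withDensity_apply _ hs, setLIntegral_map hs hf measurable_snd]
  rfl

lemma exists_add_eq_of_map_snd_eq_add {X Y : Type*} [MeasurableSpace X] [MeasurableSpace Y]
    {π : Measure (X × Y)} {q₁ q₂ : Measure Y} [SigmaFinite q₁] [SigmaFinite q₂]
    (h : π.map Prod.snd = q₁ + q₂) :
    ∃ ρ₁ ρ₂, ρ₁ + ρ₂ = π ∧ ρ₁.map Prod.snd = q₁ ∧ ρ₂.map Prod.snd = q₂ := by
  set g₁ := q₁.rnDeriv (q₁ + q₂)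
  set g₂ := q₂.rnDeriv (q₁ + q₂)
  have hg₁ : Measurable g₁ := Measure.measurable_rnDeriv _ _
  have hg₂ : Measurable g₂ := Measure.measurable_rnDeriv _ _
  have hsum : (g₁ ∘ Prod.snd + g₂ ∘ Prod.snd : X × Y → ℝ≥0∞) =ᵐ[π] 1 := by
    refine ae_of_ae_map (μ := π) measurable_snd.aemeasurable (p := fun y => g₁ y + g₂ y = 1) ?_
    rw [h]
    filter_upwards [Measure.rnDeriv_add' q₁ q₂ (q₁ + q₂), Measure.rnDeriv_self (q₁ + q₂)]
      with y hy hy'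
    rw [← Pi.add_apply, ← hy, hy']
  refine ⟨π.withDensity (g₁ ∘ Prod.snd), π.withDensity (g₂ ∘ Prod.snd), ?_, ?_, ?_⟩
  · rw [← withDensity_add_left (hg₁.comp measurable_snd), withDensity_congr_ae hsum,
      withDensity_one]
  · rw [map_snd_withDensity_comp_snd π hg₁, h]
    exact Measure.withDensity_rnDeriv_eq _ _ (Measure.le_add_right le_rfl).absolutelyContinuous
  · rw [map_snd_withDensity_comp_snd π hg₂, h]
    exact Measure.withDensity_rnDeriv_eq _ _ (Measure.le_add_left le_rfl).absolutelyContinuous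

section TransportCost

variable {Y : Type*} [PseudoMetricSpace Y] [MeasurableSpace Y]

def transportCost (π : Measure (Y × Y)) : ℝ≥0∞ := ∫⁻ z, edist z.1 z.2 ∂π

lemma transportCost_add (π π' : Measure (Y × Y)) :
    transportCost (π + π') = transportCost π + transportCost π' :=
  lintegral_add_measure _ _ _

lemma transportCost_smul (c : ℝ≥0∞) (π : Measure (Y × Y)) :
    transportCost (c • π) = c * transportCost π :=
  lintegral_smul_measure _ _

lemma transportCost_mono {π π' : Measure (Y × Y)} (h : π ≤ π') :
    transportCost π ≤ transportCost π' :=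
  lintegral_mono' h le_rfl

lemma transportCost_map_diag (μ : Measure Y) : transportCost (μ.map fun x => (x, x)) = 0 :=
  le_antisymm ((lintegral_map_le _ _).trans (by simp)) zero_le

lemma FiniteMomentR.lintegral_edist_lt_top {μ : Measure Y} (h : FiniteMomentR 1 μ)
    [IsFiniteMeasure μ] (y : Y) : ∫⁻ x, edist x y ∂μ < ∞ := by
  obtain ⟨y₀, hy₀⟩ := h
  simp_rw [Real.rpow_one] at hy₀
  calc ∫⁻ x, edist x y ∂μ ≤ ∫⁻ x, (edist x y₀ + edist y₀ y) ∂μ :=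
        lintegral_mono fun x => edist_triangle _ _ _
    _ = ∫⁻ x, ‖dist x y₀‖ₑ ∂μ + edist y₀ y * μ univ := by
        rw [lintegral_add_right _ measurable_const, lintegral_const]
        simp_rw [edist_dist, Real.enorm_of_nonneg dist_nonneg]
    _ < ∞ := ENNReal.add_lt_top.2 ⟨hy₀.2, ENNReal.mul_lt_top (edist_lt_top _ _)
        (measure_lt_top _ _)⟩

variable [OpensMeasurableSpace Y]

section SecondCountable

variable [SecondCountableTopology Y]

lemma transportCost_map_swap (π : Measure (Y × Y)) :
    transportCost (π.map Prod.swap) = transportCost π := by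
  simp_rw [transportCost, lintegral_map (measurable_fst.edist measurable_snd) measurable_swap,
    Prod.fst_swap, Prod.snd_swap, edist_comm]

-- Both sides are `0` when the cost is infinite.
lemma integral_dist_rpow_one (π : Measure (Y × Y)) :
    ∫ z, dist z.1 z.2 ^ (1 : ℝ) ∂π = (transportCost π).toReal := by
  simp_rw [Real.rpow_one]
  rw [integral_eq_lintegral_of_nonneg_ae (.of_forall fun _ => dist_nonneg) (by fun_prop)]
  simp_rw [transportCost, ← edist_dist]

lemma wrPow_one_le_transportCost {π : Measure (Y × Y)} {μ ν : Measure Y}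
    (hπ : IsCoupling π μ ν) : WrPow 1 μ ν ≤ (transportCost π).toReal :=
  csInf_le ⟨0, by rintro _ ⟨π', -, rfl⟩; rw [integral_dist_rpow_one]; positivity⟩
    ⟨π, hπ, (integral_dist_rpow_one π).symm⟩

lemma wrPow_one_nonneg (μ ν : Measure Y) : 0 ≤ WrPow 1 μ ν :=
  Real.sInf_nonneg <| by rintro _ ⟨π, -, rfl⟩; rw [integral_dist_rpow_one]; positivity

lemma exists_isCoupling_transportCost_lt (μ ν : Measure Y) [IsProbabilityMeasure μ]
    [IsProbabilityMeasure ν] {δ : ℝ} (hδ : 0 < δ) :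
    ∃ π, IsCoupling π μ ν ∧ (transportCost π).toReal < WrPow 1 μ ν + δ := by
  have hne : {v | ∃ π, IsCoupling π μ ν ∧ v = ∫ z, dist z.1 z.2 ^ (1 : ℝ) ∂π}.Nonempty :=
    ⟨_, _, isCoupling_prod μ ν, rfl⟩
  obtain ⟨_, ⟨π, hπ, rfl⟩, hlt⟩ := Real.lt_sInf_add_pos hne hδ
  exact ⟨π, hπ, by rwa [← integral_dist_rpow_one]⟩

end SecondCountable

lemma IsCoupling.transportCost_lt_top {π : Measure (Y × Y)} {μ ν : Measure Y}
    (hπ : IsCoupling π μ ν) (hμ : MemPr 1 μ) (hν : MemPr 1 ν) : transportCost π < ∞ := by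
  obtain ⟨_, hμm⟩ := hμ
  obtain ⟨_, hνm⟩ := hν
  have ⟨y, _⟩ := hμm
  calc transportCost π ≤ ∫⁻ z, (edist z.1 y + edist z.2 y) ∂π :=
        lintegral_mono fun z => edist_triangle_right _ _ _
    _ = ∫⁻ x, edist x y ∂μ + ∫⁻ x, edist x y ∂ν := by
        rw [lintegral_add_left (by fun_prop), ← hπ.1, ← hπ.2,
          lintegral_map (by fun_prop) measurable_fst, lintegral_map (by fun_prop) measurable_snd]
    _ < ∞ := ENNReal.add_lt_top.2 ⟨hμm.lintegral_edist_lt_top y, hνm.lintegral_edist_lt_top y⟩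

end TransportCost

lemma exists_gluing {X Y Z : Type*} [MeasurableSpace X] [MeasurableSpace Y] [MeasurableSpace Z]
    [StandardBorelSpace Z] [Nonempty Z] {γ : Measure (X × Y)} {ρ : Measure (Y × Z)} [SFinite γ]
    [IsFiniteMeasure ρ] (h : γ.map Prod.snd = ρ.map Prod.fst) :
    ∃ M : Measure ((X × Y) × Z), M.map Prod.fst = γ ∧ M.map (fun p => (p.1.2, p.2)) = ρ := by
  refine ⟨γ ⊗ₘ Kernel.prodMkLeft X ρ.condKernel, Measure.fst_compProd _ _, ?_⟩
  ext s hs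
  rw [Measure.map_apply (by fun_prop) hs, Measure.compProd_apply (by measurability)]
  change ∫⁻ a, ρ.condKernel a.2 (Prod.mk a.2 ⁻¹' s) ∂γ = ρ s
  rw [← lintegral_map (Kernel.measurable_kernel_prodMk_left hs) measurable_snd, h,
    ← Measure.compProd_apply hs]
  exact congrArg (· s) (ρ.disintegrate ρ.condKernel)

section Triangle

variable {Y : Type*} [PseudoMetricSpace Y] [MeasurableSpace Y] [OpensMeasurableSpace Y]
  [SecondCountableTopology Y] [StandardBorelSpace Y]

lemma exists_isCoupling_transportCost_le_add {γ ρ : Measure (Y × Y)} {μ ν ξ : Measure Y}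
    [IsFiniteMeasure μ] [IsFiniteMeasure ν] (hγ : IsCoupling γ μ ν) (hρ : IsCoupling ρ ν ξ) :
    ∃ η, IsCoupling η μ ξ ∧ transportCost η ≤ transportCost γ + transportCost ρ := by
  rcases isEmpty_or_nonempty Y with hY | hY
  · exact ⟨0, ⟨Subsingleton.elim _ _, Subsingleton.elim _ _⟩, by simp [transportCost]⟩
  have := hγ.isFiniteMeasure
  have := hρ.isFiniteMeasure
  obtain ⟨M, hMγ, hMρ⟩ := exists_gluing (hγ.2.trans hρ.1.symm)
  have hcost : Measurable fun z : Y × Y => edist z.1 z.2 := measurable_fst.edist measurable_snd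
  refine ⟨M.map fun p => (p.1.1, p.2), ⟨?_, ?_⟩, ?_⟩
  · rw [Measure.map_map measurable_fst (by fun_prop), ← hγ.1, ← hMγ,
      Measure.map_map measurable_fst measurable_fst]
    rfl
  · rw [Measure.map_map measurable_snd (by fun_prop), ← hρ.2, ← hMρ,
      Measure.map_map measurable_snd (by fun_prop)]
    rfl
  · rw [transportCost, transportCost, transportCost, lintegral_map hcost (by fun_prop), ← hMγ,
      ← hMρ, lintegral_map hcost measurable_fst, lintegral_map hcost (by fun_prop),
      ← lintegral_add_left (by fun_prop)]
    exact lintegral_mono fun p => edist_triangle _ _ _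

theorem wrPow_one_triangle {μ ν ξ : Measure Y} (hμ : MemPr 1 μ) (hν : MemPr 1 ν)
    (hξ : MemPr 1 ξ) : WrPow 1 μ ξ ≤ WrPow 1 μ ν + WrPow 1 ν ξ := by
  have := hμ.1; have := hν.1; have := hξ.1
  refine le_of_forall_pos_lt_add fun δ hδ => ?_
  obtain ⟨γ, hγ, hγδ⟩ := exists_isCoupling_transportCost_lt μ ν (half_pos hδ)
  obtain ⟨ρ, hρ, hρδ⟩ := exists_isCoupling_transportCost_lt ν ξ (half_pos hδ)
  obtain ⟨η, hη, hηle⟩ := exists_isCoupling_transportCost_le_add hγ hρ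
  have hγfin := (hγ.transportCost_lt_top hμ hν).ne
  have hρfin := (hρ.transportCost_lt_top hν hξ).ne
  calc WrPow 1 μ ξ ≤ (transportCost η).toReal := wrPow_one_le_transportCost hη
    _ ≤ (transportCost γ).toReal + (transportCost ρ).toReal := by
        rw [← ENNReal.toReal_add hγfin hρfin]
        exact ENNReal.toReal_mono (ENNReal.add_ne_top.2 ⟨hγfin, hρfin⟩) hηle
    _ < WrPow 1 μ ν + WrPow 1 ν ξ + δ := by linarith

end Triangle

section Barycenter

lemma memPr_one_iff {p : Measure ℝ} :
    MemPr 1 p ↔ IsProbabilityMeasure p ∧ Integrable (fun y : ℝ => y) p := by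
  refine ⟨fun ⟨hprob, y₀, hy₀⟩ => ⟨hprob, ?_⟩, fun ⟨hprob, hint⟩ => ⟨hprob, 0, ?_⟩⟩
  · simp_rw [Real.rpow_one, Real.dist_eq] at hy₀
    have hsub := (integrable_norm_iff (f := fun y : ℝ => y - y₀) (by fun_prop)).1 hy₀
    exact (hsub.add (integrable_const y₀)).congr (.of_forall fun y => sub_add_cancel y y₀)
  · simpa using hint.abs

variable {π : Measure (ℝ × ℝ)} {μ ν : Measure ℝ}

lemma IsCoupling.integrable_fst (hπ : IsCoupling π μ ν) (hμ : Integrable (fun y : ℝ => y) μ) :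
    Integrable (fun z : ℝ × ℝ => z.1) π :=
  (hπ.1 ▸ hμ).comp_measurable measurable_fst

lemma IsCoupling.integrable_snd (hπ : IsCoupling π μ ν) (hν : Integrable (fun y : ℝ => y) ν) :
    Integrable (fun z : ℝ × ℝ => z.2) π :=
  (hπ.2 ▸ hν).comp_measurable measurable_snd

lemma IsCoupling.integral_fst_sub_snd (hπ : IsCoupling π μ ν) (hμ : Integrable (fun y : ℝ => y) μ)
    (hν : Integrable (fun y : ℝ => y) ν) :
    ∫ z, (z.1 - z.2) ∂π = ∫ y, y ∂μ - ∫ y, y ∂ν := by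
  rw [integral_sub (hπ.integrable_fst hμ) (hπ.integrable_snd hν), ← hπ.1, ← hπ.2,
    integral_map measurable_fst.aemeasurable (by fun_prop),
    integral_map measurable_snd.aemeasurable (by fun_prop)]

lemma IsCoupling.abs_integral_sub_le (hπ : IsCoupling π μ ν)
    (hμ : Integrable (fun y : ℝ => y) μ) (hν : Integrable (fun y : ℝ => y) ν) :
    |∫ y, y ∂μ - ∫ y, y ∂ν| ≤ (transportCost π).toReal := by
  rw [← hπ.integral_fst_sub_snd hμ hν, ← integral_dist_rpow_one]
  simpa [Real.dist_eq] using abs_integral_le_integral_abs (f := fun z : ℝ × ℝ => z.1 - z.2)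

lemma IsCoupling.transportCost_toReal_eq (hπ : IsCoupling π μ ν)
    (hμ : Integrable (fun y : ℝ => y) μ) (hν : Integrable (fun y : ℝ => y) ν)
    (hle : ∀ᵐ z ∂π, z.2 ≤ z.1) :
    (transportCost π).toReal = ∫ y, y ∂μ - ∫ y, y ∂ν := by
  rw [← hπ.integral_fst_sub_snd hμ hν, ← integral_dist_rpow_one]
  refine integral_congr_ae (hle.mono fun z hz => ?_)
  simp [Real.dist_eq, abs_of_nonneg (sub_nonneg.2 hz)]

lemma abs_integral_sub_le_wrPow_one (hμ : MemPr 1 μ) (hν : MemPr 1 ν) :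
    |∫ y, y ∂μ - ∫ y, y ∂ν| ≤ WrPow 1 μ ν := by
  have := hμ.1
  have := hν.1
  refine le_csInf ⟨_, _, isCoupling_prod μ ν, rfl⟩ ?_
  rintro _ ⟨π', hπ', rfl⟩
  rw [integral_dist_rpow_one]
  exact hπ'.abs_integral_sub_le (memPr_one_iff.1 hμ).2 (memPr_one_iff.1 hν).2

end Barycenter

section ConvexCombination

variable {X : Type*} [MeasurableSpace X] {t : ℝ}

def convexComb (t : ℝ) (μ ν : Measure X) : Measure X :=
  ENNReal.ofReal (1 - t) • μ + ENNReal.ofReal t • ν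

lemma convexComb_add_convexComb (t : ℝ) (μ₁ ν₁ μ₂ ν₂ : Measure X) :
    convexComb t μ₁ ν₁ + convexComb t μ₂ ν₂ = convexComb t (μ₁ + μ₂) (ν₁ + ν₂) := by
  simp only [convexComb, smul_add]
  abel

lemma convexComb_self (ht₀ : 0 ≤ t) (ht₁ : t ≤ 1) (μ : Measure X) : convexComb t μ μ = μ := by
  rw [convexComb, ← add_smul, ← ENNReal.ofReal_add (by linarith) ht₀]
  simp

lemma IsCoupling.convexComb {Y : Type*} [MeasurableSpace Y] {π π' : Measure (X × Y)}
    {μ μ' : Measure X} {ν ν' : Measure Y} (h : IsCoupling π μ ν) (h' : IsCoupling π' μ' ν')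
    (t : ℝ) : IsCoupling (convexComb t π π') (convexComb t μ μ') (convexComb t ν ν') :=
  (h.smul _).add (h'.smul _)

lemma isProbabilityMeasure_convexComb (ht₀ : 0 ≤ t) (ht₁ : t ≤ 1) {μ ν : Measure X}
    [IsProbabilityMeasure μ] [IsProbabilityMeasure ν] :
    IsProbabilityMeasure (convexComb t μ ν) :=
  ⟨by simp [convexComb, ← ENNReal.ofReal_add (by linarith : 0 ≤ 1 - t) ht₀]⟩

end ConvexCombination

lemma transportCost_convexComb {Y : Type*} [PseudoMetricSpace Y] [MeasurableSpace Y] (t : ℝ)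
    (π π' : Measure (Y × Y)) :
    transportCost (convexComb t π π') =
      ENNReal.ofReal (1 - t) * transportCost π + ENNReal.ofReal t * transportCost π' := by
  rw [convexComb, transportCost_add, transportCost_smul, transportCost_smul]

lemma wrPow_one_convexComb_le {Y : Type*} [PseudoMetricSpace Y] [MeasurableSpace Y]
    [OpensMeasurableSpace Y] [SecondCountableTopology Y] {σ : Measure (Y × Y)} {ν b : Measure Y}
    (hσ : IsCoupling σ ν b) {t : ℝ} (ht₀ : 0 ≤ t) (ht₁ : t ≤ 1) :
    WrPow 1 (convexComb t b ν) b ≤ t * (transportCost σ).toReal := by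
  have hπ := (isCoupling_map_diag b).convexComb hσ t
  rw [convexComb_self ht₀ ht₁ b] at hπ
  calc WrPow 1 (convexComb t b ν) b ≤ _ := wrPow_one_le_transportCost hπ
    _ = t * (transportCost σ).toReal := by
      rw [transportCost_convexComb, transportCost_map_diag, mul_zero, zero_add,
        ENNReal.toReal_mul, ENNReal.toReal_ofReal ht₀]

lemma integral_id_convexComb {t : ℝ} (ht₀ : 0 ≤ t) (ht₁ : t ≤ 1) {μ ν : Measure ℝ}
    (hμ : Integrable (fun y : ℝ => y) μ) (hν : Integrable (fun y : ℝ => y) ν) :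
    ∫ y, y ∂(convexComb t μ ν) = (1 - t) * ∫ y, y ∂μ + t * ∫ y, y ∂ν := by
  rw [convexComb, integral_add_measure (hμ.smul_measure ENNReal.ofReal_ne_top)
    (hν.smul_measure ENNReal.ofReal_ne_top), integral_smul_measure, integral_smul_measure,
    ENNReal.toReal_ofReal (by linarith), ENNReal.toReal_ofReal ht₀, smul_eq_mul, smul_eq_mul]

lemma memPr_one_convexComb {t : ℝ} (ht₀ : 0 ≤ t) (ht₁ : t ≤ 1) {μ ν : Measure ℝ}
    (hμ : MemPr 1 μ) (hν : MemPr 1 ν) : MemPr 1 (convexComb t μ ν) := by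
  obtain ⟨_, hμi⟩ := memPr_one_iff.1 hμ
  obtain ⟨_, hνi⟩ := memPr_one_iff.1 hν
  exact memPr_one_iff.2 ⟨isProbabilityMeasure_convexComb ht₀ ht₁,
    (hμi.smul_measure ENNReal.ofReal_ne_top).add_measure (hνi.smul_measure ENNReal.ofReal_ne_top)⟩

lemma exists_median (μ : Measure ℝ) [IsFiniteMeasure μ] (h : μ univ = 2) :
    ∃ a, 1 ≤ μ (Iic a) ∧ μ (Iio a) ≤ 1 := by
  set S := {x | 1 ≤ μ (Iic x)}
  have hS : ∀ ⦃x y⦄, x ≤ y → x ∈ S → y ∈ S := fun x y hxy hx =>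
    hx.trans (measure_mono (Iic_subset_Iic.2 hxy))
  have hne : S.Nonempty := by
    obtain ⟨x, hx⟩ := ((tendsto_measure_Iic_atTop μ).eventually_const_le
      (by rw [h]; norm_num : (1 : ℝ≥0∞) < μ univ)).exists
    exact ⟨x, hx⟩
  have hbdd : BddBelow S := by
    have hlim := tendsto_measure_iInter_atBot (μ := μ) (s := Iic)
      (fun _ => measurableSet_Iic.nullMeasurableSet) (fun _ _ => Iic_subset_Iic.2)
      ⟨0, measure_ne_top _ _⟩
    rw [iInter_Iic_eq_empty_iff.2 (by simp), measure_empty] at hlim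
    obtain ⟨x₀, hx₀⟩ := Filter.eventually_atBot.1 (hlim.eventually_lt_const one_pos)
    exact ⟨x₀, fun x hx => le_of_not_gt fun hlt => (hx₀ x hlt.le).not_ge hx⟩
  refine ⟨sInf S, ?_, ?_⟩
  · have hlim := tendsto_measure_biInter_gt (μ := μ) (s := Iic) (a := sInf S)
      (fun _ _ => measurableSet_Iic.nullMeasurableSet) (fun _ _ _ h => Iic_subset_Iic.2 h)
      ⟨sInf S + 1, by linarith, measure_ne_top _ _⟩
    have hIic : ⋂ r > sInf S, Iic r = Iic (sInf S) := by
      ext x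
      simpa using forall_gt_imp_ge_iff_le_of_dense
    rw [hIic] at hlim
    refine ge_of_tendsto hlim (eventually_nhdsWithin_of_forall fun r hr => ?_)
    obtain ⟨s, hs, hsr⟩ := exists_lt_of_csInf_lt hne hr
    exact hS hsr.le hs
  · obtain ⟨u, hu_mono, hu_lt, hu_lim⟩ := exists_seq_strictMono_tendsto (sInf S)
    rw [← iUnion_Iic_eq_Iio_of_lt_of_tendsto hu_lt hu_lim,
      Monotone.measure_iUnion fun i j hij => Iic_subset_Iic.2 (hu_mono.monotone hij)]
    exact iSup_le fun n => (not_le.1 (show u n ∉ S from notMem_of_lt_csInf (hu_lt n) hbdd)).le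

lemma exists_split_at_median (μ : Measure ℝ) [IsFiniteMeasure μ] (h : μ univ = 2) :
    ∃ a, ∃ νhi νlo : Measure ℝ, νhi + νlo = μ ∧ νhi univ = 1 ∧ νlo univ = 1 ∧
      νhi (Iio a) = 0 ∧ νlo (Ioi a) = 0 := by
  obtain ⟨a, hIic, hIio⟩ := exists_median μ h
  set θ := 1 - μ (Iio a)
  have hθ : θ ≤ μ {a} := by
    rw [tsub_le_iff_left, ← measure_union (by simp) (measurableSet_singleton a), Iio_union_right]
    exact hIic
  set νlo := μ.restrict (Iio a) + θ • Measure.dirac a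
  have hνlo : νlo ≤ μ :=
    calc νlo ≤ μ.restrict (Iio a) + μ.restrict {a} := by
          rw [Measure.restrict_singleton]
          exact add_le_add_right
            (Measure.le_iff'.2 fun s => by simpa using mul_le_mul_left hθ _) _
      _ = μ.restrict (Iic a) := by
          rw [← Measure.restrict_union (by simp) (measurableSet_singleton a), Iio_union_right]
      _ ≤ μ := Measure.restrict_le_self
  have hνlouniv : νlo univ = 1 := by simp [νlo, θ, add_tsub_cancel_of_le hIio]
  have : IsFiniteMeasure νlo := ⟨by simp [hνlouniv]⟩
  refine ⟨a, μ - νlo, νlo, Measure.sub_add_cancel_of_le hνlo, ?_, hνlouniv, ?_, ?_⟩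
  · rw [Measure.sub_apply .univ hνlo, h, hνlouniv]
    exact ENNReal.sub_eq_of_eq_add_rev (by simp) one_add_one_eq_two.symm
  · rw [Measure.sub_apply measurableSet_Iio hνlo]
    simp [νlo]
  · simp [νlo, Ioi_inter_Iio]

lemma MeasureTheory.Measure.restrict_le_of_le_add {X : Type*} [MeasurableSpace X]
    {μ ν₁ ν₂ : Measure X} {s : Set X} (hμ : μ ≤ ν₁ + ν₂) (hs : ν₂ s = 0) : μ.restrict s ≤ ν₁ :=
  calc μ.restrict s ≤ (ν₁ + ν₂).restrict s := Measure.restrict_mono subset_rfl hμ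
    _ = ν₁.restrict s := by rw [Measure.restrict_add, Measure.restrict_eq_zero.2 hs, add_zero]
    _ ≤ ν₁ := Measure.restrict_le_self

section Domination

lemma exists_isCoupling_add_add_ae_le (β r s : Measure ℝ) [IsFiniteMeasure r]
    [IsFiniteMeasure s] {a : ℝ} (hr : r (Iio a) = 0) (hs : s (Ioi a) = 0)
    (hrs : r univ = s univ) :
    ∃ σ, IsCoupling σ (β + r) (β + s) ∧ ∀ᵐ z ∂σ, z.2 ≤ z.1 := by
  refine ⟨β.map (fun x => (x, x)) + (r univ)⁻¹ • r.prod s,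
    (isCoupling_map_diag β).add (isCoupling_smul_prod hrs), ?_⟩
  have hmeas : MeasurableSet {z : ℝ × ℝ | z.2 ≤ z.1} :=
    measurableSet_le measurable_snd measurable_fst
  have hr' : ∀ᵐ x ∂r, a ≤ x := (measure_eq_zero_iff_ae_notMem.1 hr).mono fun _ hx => not_lt.1 hx
  have hs' : ∀ᵐ y ∂s, y ≤ a := (measure_eq_zero_iff_ae_notMem.1 hs).mono fun _ hy => not_lt.1 hy
  rw [ae_add_measure_iff]
  exact ⟨(ae_map_iff (by fun_prop) hmeas).2 (.of_forall fun _ => le_rfl),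
    Measure.ae_smul_measure ((Measure.ae_prod_iff_ae_ae hmeas).2
      (hr'.mono fun _ hx => hs'.mono fun _ hy => hy.trans hx)) _⟩

variable {ν b : Measure ℝ} [IsFiniteMeasure ν] [IsFiniteMeasure b] {a : ℝ}

lemma exists_isCoupling_ae_le_of_restrict_Ioi_le (hν : ν (Iio a) = 0)
    (hb : b.restrict (Ioi a) ≤ ν) (hmass : ν univ = b univ) :
    ∃ σ, IsCoupling σ ν b ∧ ∀ᵐ z ∂σ, z.2 ≤ z.1 := by
  have hνsplit : b.restrict (Ioi a) + (ν - b.restrict (Ioi a)) = ν := by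
    rw [add_comm]; exact Measure.sub_add_cancel_of_le hb
  have hbsplit : b.restrict (Ioi a) + b.restrict (Iic a) = b := by
    rw [← compl_Ioi]; exact Measure.restrict_add_restrict_compl measurableSet_Ioi
  have hrs : (ν - b.restrict (Ioi a)) univ = b.restrict (Iic a) univ := by
    refine (ENNReal.add_right_inj (measure_ne_top (b.restrict (Ioi a)) univ)).1 ?_
    rw [← Measure.add_apply, ← Measure.add_apply, hνsplit, hbsplit, hmass]
  obtain ⟨σ, hσ, hle⟩ := exists_isCoupling_add_add_ae_le (b.restrict (Ioi a))
    (ν - b.restrict (Ioi a)) (b.restrict (Iic a)) (a := a)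
    (Measure.absolutelyContinuous_of_le Measure.sub_le hν) (by simp [Ioi_inter_Iic]) hrs
  exact ⟨σ, by rwa [hνsplit, hbsplit] at hσ, hle⟩

lemma exists_isCoupling_ae_le_of_restrict_Iio_le (hb : b (Ioi a) = 0)
    (hν : ν.restrict (Iio a) ≤ b) (hmass : ν univ = b univ) :
    ∃ σ, IsCoupling σ ν b ∧ ∀ᵐ z ∂σ, z.2 ≤ z.1 := by
  have hνsplit : ν.restrict (Iio a) + ν.restrict (Ici a) = ν := by
    rw [← compl_Iio]; exact Measure.restrict_add_restrict_compl measurableSet_Iio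
  have hbsplit : ν.restrict (Iio a) + (b - ν.restrict (Iio a)) = b := by
    rw [add_comm]; exact Measure.sub_add_cancel_of_le hν
  have hrs : ν.restrict (Ici a) univ = (b - ν.restrict (Iio a)) univ := by
    refine (ENNReal.add_right_inj (measure_ne_top (ν.restrict (Iio a)) univ)).1 ?_
    rw [← Measure.add_apply, ← Measure.add_apply, hνsplit, hbsplit, hmass]
  obtain ⟨σ, hσ, hle⟩ := exists_isCoupling_add_add_ae_le (ν.restrict (Iio a))
    (ν.restrict (Ici a)) (b - ν.restrict (Iio a)) (a := a) (by simp [Iio_inter_Ici])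
    (Measure.absolutelyContinuous_of_le Measure.sub_le hb) hrs
  exact ⟨σ, by rwa [hνsplit, hbsplit] at hσ, hle⟩

end Domination

lemma exists_mul_eq_of_nonneg_of_le {ε D : ℝ} (hε : 0 ≤ ε) (hεD : ε ≤ D) :
    ∃ t : ℝ, 0 ≤ t ∧ t ≤ 1 ∧ t * D = ε := by
  rcases (hε.trans hεD).eq_or_lt with hD | hD
  · exact ⟨0, le_rfl, zero_le_one, by linarith⟩
  · exact ⟨ε / D, div_nonneg hε hD.le, div_le_one_of_le₀ hεD hD.le, div_mul_cancel₀ _ hD.ne'⟩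

lemma exists_upper_lower_halves (μ : Measure ℝ) [IsFiniteMeasure μ] (h : μ univ = 2)
    (hμ : Integrable (fun y : ℝ => y) μ) :
    ∃ νhi νlo : Measure ℝ, νhi + νlo = μ ∧ MemPr 1 νhi ∧ MemPr 1 νlo ∧
      (∀ b ≤ μ, IsProbabilityMeasure b → ∃ σ, IsCoupling σ νhi b ∧
        (transportCost σ).toReal = ∫ y, y ∂νhi - ∫ y, y ∂b) ∧
      (∀ b ≤ μ, IsProbabilityMeasure b → ∃ σ, IsCoupling σ νlo b ∧
        (transportCost σ).toReal = ∫ y, y ∂b - ∫ y, y ∂νlo) := by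
  obtain ⟨a, νhi, νlo, hsplit, hhi₁, hlo₁, hhi, hlo⟩ := exists_split_at_median μ h
  have : IsProbabilityMeasure νhi := ⟨hhi₁⟩
  have : IsProbabilityMeasure νlo := ⟨hlo₁⟩
  have hhii := hμ.mono_measure (hsplit ▸ Measure.le_add_right le_rfl)
  have hloi := hμ.mono_measure (hsplit ▸ Measure.le_add_left le_rfl)
  refine ⟨νhi, νlo, hsplit, memPr_one_iff.2 ⟨inferInstance, hhii⟩,
    memPr_one_iff.2 ⟨inferInstance, hloi⟩, fun b hb _ => ?_, fun b hb _ => ?_⟩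
  · obtain ⟨σ, hσ, hle⟩ := exists_isCoupling_ae_le_of_restrict_Ioi_le hhi
      (Measure.restrict_le_of_le_add (hsplit ▸ hb) hlo) (by simp)
    exact ⟨σ, hσ, hσ.transportCost_toReal_eq hhii (hμ.mono_measure hb) hle⟩
  · obtain ⟨σ, hσ, hle⟩ := exists_isCoupling_ae_le_of_restrict_Iio_le hlo
      (Measure.restrict_le_of_le_add (add_comm νhi νlo ▸ hsplit ▸ hb) hhi) (by simp)
    refine ⟨σ.map Prod.swap, hσ.swap, ?_⟩
    rw [transportCost_map_swap, hσ.transportCost_toReal_eq (hμ.mono_measure hb) hloi hle]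

lemma exists_barycenter_correction_of_le {b₁ b₂ p₁ p₂ : Measure ℝ} (hb₁ : MemPr 1 b₁)
    (hb₂ : MemPr 1 b₂) (hp₁ : MemPr 1 p₁) (hp₂ : MemPr 1 p₂) (hsum : b₁ + b₂ = p₁ + p₂)
    (hle : ∫ y, y ∂b₁ ≤ ∫ y, y ∂p₁) :
    ∃ Q₁ Q₂, MemPr 1 Q₁ ∧ MemPr 1 Q₂ ∧ Q₁ + Q₂ = p₁ + p₂ ∧
      ∫ y, y ∂Q₁ = ∫ y, y ∂p₁ ∧ ∫ y, y ∂Q₂ = ∫ y, y ∂p₂ ∧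
      WrPow 1 Q₁ b₁ ≤ ∫ y, y ∂p₁ - ∫ y, y ∂b₁ ∧ WrPow 1 Q₂ b₂ ≤ ∫ y, y ∂p₁ - ∫ y, y ∂b₁ := by
  obtain ⟨_, hb₁i⟩ := memPr_one_iff.1 hb₁
  obtain ⟨_, hb₂i⟩ := memPr_one_iff.1 hb₂
  obtain ⟨_, hp₁i⟩ := memPr_one_iff.1 hp₁
  obtain ⟨_, hp₂i⟩ := memPr_one_iff.1 hp₂
  obtain ⟨νhi, νlo, hsplit, hhi, hlo, hdom_hi, hdom_lo⟩ := exists_upper_lower_halves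
    (p₁ + p₂) (by simp [one_add_one_eq_two]) (hp₁i.add_measure hp₂i)
  obtain ⟨σ₁, hσ₁, hcost₁⟩ := hdom_hi b₁ (hsum ▸ Measure.le_add_right le_rfl) inferInstance
  obtain ⟨σ₂, hσ₂, hcost₂⟩ := hdom_lo b₂ (hsum ▸ Measure.le_add_left le_rfl) inferInstance
  obtain ⟨σ, -, hcost⟩ := hdom_hi p₁ (Measure.le_add_right le_rfl) inferInstance
  have hbp : ∫ y, y ∂b₁ + ∫ y, y ∂b₂ = ∫ y, y ∂p₁ + ∫ y, y ∂p₂ := by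
    rw [← integral_add_measure hb₁i hb₂i, hsum, integral_add_measure hp₁i hp₂i]
  have hhilo : ∫ y, y ∂νhi + ∫ y, y ∂νlo = ∫ y, y ∂p₁ + ∫ y, y ∂p₂ := by
    rw [← integral_add_measure (memPr_one_iff.1 hhi).2 (memPr_one_iff.1 hlo).2, hsplit,
      integral_add_measure hp₁i hp₂i]
  obtain ⟨t, ht₀, ht₁, htD⟩ := exists_mul_eq_of_nonneg_of_le (sub_nonneg.2 hle)
    (sub_le_sub_right (sub_nonneg.1 (hcost ▸ ENNReal.toReal_nonneg)) (∫ y, y ∂b₁))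
  refine ⟨convexComb t b₁ νhi, convexComb t b₂ νlo, memPr_one_convexComb ht₀ ht₁ hb₁ hhi,
    memPr_one_convexComb ht₀ ht₁ hb₂ hlo, ?_, ?_, ?_, ?_, ?_⟩
  · rw [convexComb_add_convexComb, hsum, hsplit, convexComb_self ht₀ ht₁]
  · rw [integral_id_convexComb ht₀ ht₁ hb₁i (memPr_one_iff.1 hhi).2]
    linear_combination htD
  · rw [integral_id_convexComb ht₀ ht₁ hb₂i (memPr_one_iff.1 hlo).2]
    linear_combination hbp - htD - t * (hbp - hhilo)
  · refine (wrPow_one_convexComb_le hσ₁ ht₀ ht₁).trans_eq ?_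
    rw [hcost₁, htD]
  · refine (wrPow_one_convexComb_le hσ₂ ht₀ ht₁).trans_eq ?_
    rw [hcost₂, ← htD]
    linear_combination t * (hbp - hhilo)

lemma exists_barycenter_correction {b₁ b₂ p₁ p₂ : Measure ℝ} (hb₁ : MemPr 1 b₁)
    (hb₂ : MemPr 1 b₂) (hp₁ : MemPr 1 p₁) (hp₂ : MemPr 1 p₂) (hsum : b₁ + b₂ = p₁ + p₂) :
    ∃ Q₁ Q₂, MemPr 1 Q₁ ∧ MemPr 1 Q₂ ∧ Q₁ + Q₂ = p₁ + p₂ ∧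
      ∫ y, y ∂Q₁ = ∫ y, y ∂p₁ ∧ ∫ y, y ∂Q₂ = ∫ y, y ∂p₂ ∧
      WrPow 1 Q₁ b₁ ≤ |∫ y, y ∂p₁ - ∫ y, y ∂b₁| ∧ WrPow 1 Q₂ b₂ ≤ |∫ y, y ∂p₁ - ∫ y, y ∂b₁| := by
  rcases le_total (∫ y, y ∂b₁) (∫ y, y ∂p₁) with hle | hle
  · rw [abs_of_nonneg (sub_nonneg.2 hle)]
    exact exists_barycenter_correction_of_le hb₁ hb₂ hp₁ hp₂ hsum hle
  · have hbp : ∫ y, y ∂b₁ + ∫ y, y ∂b₂ = ∫ y, y ∂p₁ + ∫ y, y ∂p₂ := by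
      rw [← integral_add_measure (memPr_one_iff.1 hb₁).2 (memPr_one_iff.1 hb₂).2, hsum,
        integral_add_measure (memPr_one_iff.1 hp₁).2 (memPr_one_iff.1 hp₂).2]
    obtain ⟨Q₂, Q₁, hQ₂, hQ₁, hQ, hm₂, hm₁, hW₂, hW₁⟩ := exists_barycenter_correction_of_le
      hb₂ hb₁ hp₂ hp₁ (by rw [add_comm b₂, add_comm p₂, hsum]) (by linarith)
    have habs : |∫ y, y ∂p₁ - ∫ y, y ∂b₁| = ∫ y, y ∂p₂ - ∫ y, y ∂b₂ := by
      rw [abs_of_nonpos (by linarith)]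
      linarith
    rw [habs]
    exact ⟨Q₁, Q₂, hQ₁, hQ₂, by rw [add_comm Q₁, add_comm p₁, hQ], hm₁, hm₂, hW₁, hW₂⟩

lemma IsCoupling.exists_split_of_snd_eq_add {π : Measure (ℝ × ℝ)} {P q₁ q₂ : Measure ℝ}
    (hπ : IsCoupling π P (q₁ + q₂)) (hP : Integrable (fun y : ℝ => y) P) (hq₁ : MemPr 1 q₁)
    (hq₂ : MemPr 1 q₂) (hfin : transportCost π ≠ ∞) :
    ∃ b₁ b₂, b₁ + b₂ = P ∧ MemPr 1 b₁ ∧ MemPr 1 b₂ ∧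
      WrPow 1 b₁ q₁ ≤ (transportCost π).toReal ∧ WrPow 1 b₂ q₂ ≤ (transportCost π).toReal := by
  have := hq₁.1
  have := hq₂.1
  obtain ⟨ρ₁, ρ₂, hρ, hρ₁, hρ₂⟩ := exists_add_eq_of_map_snd_eq_add hπ.2
  have hpiece : ∀ {ρ q}, ρ ≤ π → ρ.map Prod.snd = q → MemPr 1 q →
      MemPr 1 (ρ.map Prod.fst) ∧ WrPow 1 (ρ.map Prod.fst) q ≤ (transportCost π).toReal := by
    intro ρ q hρπ hρq hq
    have hc : IsCoupling ρ (ρ.map Prod.fst) q := ⟨rfl, hρq⟩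
    refine ⟨memPr_one_iff.2 ⟨⟨by rw [hc.measure_univ_eq, hq.1.measure_univ]⟩,
      hP.mono_measure (hπ.1 ▸ Measure.map_mono hρπ measurable_fst)⟩, ?_⟩
    exact (wrPow_one_le_transportCost hc).trans
      (ENNReal.toReal_mono hfin (transportCost_mono hρπ))
  obtain ⟨hb₁, hW₁⟩ := hpiece (hρ ▸ Measure.le_add_right le_rfl) hρ₁ hq₁
  obtain ⟨hb₂, hW₂⟩ := hpiece (hρ ▸ Measure.le_add_left le_rfl) hρ₂ hq₂
  refine ⟨_, _, ?_, hb₁, hb₂, hW₁, hW₂⟩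
  rw [← Measure.map_add _ _ measurable_fst, hρ, hπ.1]

lemma exists_competitors_wrPow_le {p₁ p₂ q₁ q₂ P₁ P₂ : Measure ℝ} (hp₁ : MemPr 1 p₁)
    (hp₂ : MemPr 1 p₂) (hq₁ : MemPr 1 q₁) (hq₂ : MemPr 1 q₂) (hsum : p₁ + p₂ = q₁ + q₂)
    (hbar₁ : ∫ y, y ∂p₁ = ∫ y, y ∂q₁) (hP₁ : MemPr 1 P₁) (hP₂ : MemPr 1 P₂) {δ : ℝ}
    (hδ : 0 < δ) :
    ∃ Q₁ Q₂, (MemPr 1 Q₁ ∧ MemPr 1 Q₂) ∧ Q₁ + Q₂ = P₁ + P₂ ∧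
      (∫ y, y ∂Q₁ = ∫ y, y ∂P₁ ∧ ∫ y, y ∂Q₂ = ∫ y, y ∂P₂) ∧
      WrPow 1 Q₁ q₁ ≤ 3 * WrPow 1 P₁ p₁ + 2 * WrPow 1 P₂ p₂ + δ ∧
      WrPow 1 Q₂ q₂ ≤ 3 * WrPow 1 P₁ p₁ + 2 * WrPow 1 P₂ p₂ + δ := by
  have := hP₁.1
  have := hP₂.1
  have := hp₁.1
  have := hp₂.1
  obtain ⟨π₁, hπ₁, hπ₁δ⟩ := exists_isCoupling_transportCost_lt P₁ p₁ (by positivity : 0 < δ / 4)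
  obtain ⟨π₂, hπ₂, hπ₂δ⟩ := exists_isCoupling_transportCost_lt P₂ p₂ (by positivity : 0 < δ / 4)
  have hfin₁ := (hπ₁.transportCost_lt_top hP₁ hp₁).ne
  have hfin₂ := (hπ₂.transportCost_lt_top hP₂ hp₂).ne
  obtain ⟨b₁, b₂, hb, hb₁, hb₂, hbW₁, hbW₂⟩ := (hsum ▸ hπ₁.add hπ₂).exists_split_of_snd_eq_add
    ((memPr_one_iff.1 hP₁).2.add_measure (memPr_one_iff.1 hP₂).2) hq₁ hq₂
    (by rw [transportCost_add]; exact ENNReal.add_ne_top.2 ⟨hfin₁, hfin₂⟩)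
  rw [transportCost_add, ENNReal.toReal_add hfin₁ hfin₂] at hbW₁ hbW₂
  obtain ⟨Q₁, Q₂, hQ₁, hQ₂, hQ, hm₁, hm₂, hQW₁, hQW₂⟩ :=
    exists_barycenter_correction hb₁ hb₂ hP₁ hP₂ hb
  have hε : |∫ y, y ∂P₁ - ∫ y, y ∂b₁| ≤ WrPow 1 P₁ p₁ + WrPow 1 b₁ q₁ := by
    have h₁ := abs_integral_sub_le_wrPow_one hP₁ hp₁
    have h₂ := abs_integral_sub_le_wrPow_one hb₁ hq₁
    rw [← hbar₁, abs_sub_comm] at h₂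
    linarith [abs_sub_le (∫ y, y ∂P₁) (∫ y, y ∂p₁) (∫ y, y ∂b₁)]
  refine ⟨Q₁, Q₂, ⟨hQ₁, hQ₂⟩, hQ, ⟨hm₁, hm₂⟩, ?_, ?_⟩
  · linarith [wrPow_one_triangle hQ₁ hb₁ hq₁]
  · linarith [wrPow_one_triangle hQ₂ hb₂ hq₂]

theorem martingale_approximative_sequence_two_general {p₁ p₂ q₁ q₂ : Measure ℝ}
    (hp₁ : MemPr 1 p₁) (hp₂ : MemPr 1 p₂) (hq₁ : MemPr 1 q₁) (hq₂ : MemPr 1 q₂)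
    (hsum : p₁ + p₂ = q₁ + q₂)
    (hbar₁ : ∫ y, y ∂p₁ = ∫ y, y ∂q₁)
    (pk₁ pk₂ : ℕ → Measure ℝ)
    (hpk : ∀ k, MemPr 1 (pk₁ k) ∧ MemPr 1 (pk₂ k))
    (hconv₁ : TendstoWr 1 pk₁ p₁) (hconv₂ : TendstoWr 1 pk₂ p₂) :
    ∃ qk₁ qk₂ : ℕ → Measure ℝ,
      (∀ k, MemPr 1 (qk₁ k) ∧ MemPr 1 (qk₂ k)) ∧
      (∀ k, qk₁ k + qk₂ k = pk₁ k + pk₂ k) ∧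
      (∀ k, ∫ y, y ∂(qk₁ k) = ∫ y, y ∂(pk₁ k) ∧
            ∫ y, y ∂(qk₂ k) = ∫ y, y ∂(pk₂ k)) ∧
      TendstoWr 1 qk₁ q₁ ∧ TendstoWr 1 qk₂ q₂ := by
  choose qk₁ qk₂ hmem hsumk hbar hW₁ hW₂ using fun k =>
    exists_competitors_wrPow_le hp₁ hp₂ hq₁ hq₂ hsum hbar₁ (hpk k).1 (hpk k).2
      (Nat.one_div_pos_of_nat (n := k) (α := ℝ))
  have hbound : Tendsto (fun k : ℕ => 3 * WrPow 1 (pk₁ k) p₁ + 2 * WrPow 1 (pk₂ k) p₂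
      + 1 / ((k : ℝ) + 1)) atTop (𝓝 0) := by
    simpa using ((hconv₁.const_mul 3).add (hconv₂.const_mul 2)).add
      tendsto_one_div_add_atTop_nhds_zero_nat
  exact ⟨qk₁, qk₂, hmem, hsumk, hbar,
    squeeze_zero (fun _ => wrPow_one_nonneg _ _) hW₁ hbound,
    squeeze_zero (fun _ => wrPow_one_nonneg _ _) hW₂ hbound⟩

/-- **Martingale approximative sequence lemma, two-measure case** (Lemma 3.7 for
`N = 2`): competitors matching the total sum and the barycenters can be approximated
along `W₁`-convergent sequences. -/
theorem martingale_approximative_sequence_two {p₁ p₂ q₁ q₂ : Measure ℝ}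
    (hp₁ : MemPr 1 p₁) (hp₂ : MemPr 1 p₂) (hq₁ : MemPr 1 q₁) (hq₂ : MemPr 1 q₂)
    (hsum : p₁ + p₂ = q₁ + q₂)
    (hbar₁ : ∫ y, y ∂p₁ = ∫ y, y ∂q₁) (hbar₂ : ∫ y, y ∂p₂ = ∫ y, y ∂q₂)
    (pk₁ pk₂ : ℕ → Measure ℝ)
    (hpk : ∀ k, MemPr 1 (pk₁ k) ∧ MemPr 1 (pk₂ k))
    (hconv₁ : TendstoWr 1 pk₁ p₁) (hconv₂ : TendstoWr 1 pk₂ p₂) :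
    ∃ qk₁ qk₂ : ℕ → Measure ℝ,
      (∀ k, MemPr 1 (qk₁ k) ∧ MemPr 1 (qk₂ k)) ∧
      (∀ k, qk₁ k + qk₂ k = pk₁ k + pk₂ k) ∧
      (∀ k, ∫ y, y ∂(qk₁ k) = ∫ y, y ∂(pk₁ k) ∧
            ∫ y, y ∂(qk₂ k) = ∫ y, y ∂(pk₂ k)) ∧
      TendstoWr 1 qk₁ q₁ ∧ TendstoWr 1 qk₂ q₂ :=
  martingale_approximative_sequence_two_general hp₁ hp₂ hq₁ hq₂ hsum hbar₁ pk₁ pk₂ hpk hconv₁ hconv₂
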